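/- For every 2×2 real symmetric positive definite matrix N there exists S ∈ Sp(2,ℝ) such that S N Sᵀ = √(det N) · I₂; moreover, since tr N ≥ 2√(det N), the associated coherent-state teleportation fidelity does not decrease under this symplectic balancing: 2/√(4 + 4√(det N) + det N) ≥ 2/√(4 + 2·tr N + det N). -/

import Mathlib

/-!
A 2×2 matrix `M` satisfies `M J Mᵀ = (det M) J`, so a matrix is symplectic exactly when its
determinant is `1`. For `N` positive definite put `s = √(det N)` and `B = adj N + s I`, a multiple
of `N^{-1/2}`. From `adj N · N = s² I` and `adj N + N = (tr N) I` (Cayley–Hamilton) one gets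
`B N B = s² (tr N + 2s) I` and `det B = s (tr N + 2s)`, so `S = (det B)^{-1/2} B` balances `N`.
The trace bound is `(tr N)² - 4 det N = (a - c)² + 4b² ≥ 0` for `N = [[a, b], [b, c]]`.
-/

open Matrix

noncomputable section

def J2 : Matrix (Fin 2) (Fin 2) ℝ := !![0, 1; -1, 0]

namespace Matrix

section Fin2

variable {R : Type*} [CommRing R] (A : Matrix (Fin 2) (Fin 2) R)

theorem det_add_smul_one_fin_two (t : R) :
    (A + t • 1).det = A.det + t * A.trace + t ^ 2 := by
  simp only [det_fin_two, trace_fin_two, add_apply, smul_apply, one_apply_eq, one_apply_ne,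
    smul_eq_mul, ne_eq, zero_ne_one, one_ne_zero, not_false_eq_true]
  ring

theorem trace_adjugate_fin_two : (adjugate A).trace = A.trace := by
  simp [adjugate_fin_two, trace_fin_two, add_comm]

theorem det_adjugate_fin_two : (adjugate A).det = A.det := by
  simp [det_adjugate]

theorem adjugate_add_self_fin_two : adjugate A + A = A.trace • 1 := by
  ext i j
  fin_cases i <;> fin_cases j <;> simp [adjugate_fin_two, trace_fin_two, add_comm]

variable {A} {t : R}

theorem det_adjugate_add_smul_one_of_det_eq_sq (ht : A.det = t ^ 2) :
    (adjugate A + t • 1).det = t * (A.trace + 2 * t) := by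
  rw [det_add_smul_one_fin_two, det_adjugate_fin_two, trace_adjugate_fin_two, ht]
  ring

theorem adjugate_add_smul_one_mul_self_mul_of_det_eq_sq (ht : A.det = t ^ 2) :
    (adjugate A + t • 1) * A * (adjugate A + t • 1) = (t ^ 2 * (A.trace + 2 * t)) • 1 := by
  have hBA : (adjugate A + t • 1) * A = t ^ 2 • 1 + t • A := by
    rw [add_mul, adjugate_mul, ht, smul_mul_assoc, one_mul]
  rw [hBA]
  calc (t ^ 2 • 1 + t • A) * (adjugate A + t • 1)
      = t ^ 2 • (adjugate A + A) + (t * A.det + t ^ 3) • 1 := by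
        simp only [add_mul, mul_add, smul_mul_assoc, mul_smul_comm, one_mul, mul_one, mul_adjugate]
        module
    _ = (t ^ 2 * (A.trace + 2 * t)) • 1 := by
        rw [adjugate_add_self_fin_two, ht, smul_smul, ← add_smul]
        ring_nf

theorem four_mul_det_le_trace_sq_fin_two {R : Type*} [CommRing R] [LinearOrder R]
    [IsStrictOrderedRing R] {A : Matrix (Fin 2) (Fin 2) R} (hA : A.IsSymm) :
    4 * A.det ≤ A.trace ^ 2 := by
  have hb : A 1 0 = A 0 1 := hA.apply 0 1
  rw [det_fin_two, trace_fin_two, hb]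
  nlinarith [sq_nonneg (A 0 0 - A 1 1), sq_nonneg (A 0 1)]

end Fin2

theorem mul_J2_mul_transpose (M : Matrix (Fin 2) (Fin 2) ℝ) : M * J2 * Mᵀ = M.det • J2 := by
  ext i j
  fin_cases i <;> fin_cases j <;> simp [J2, mul_apply, Fin.sum_univ_two, det_fin_two] <;> ring

theorem exists_symplectic_conj_eq_smul_one {N B : Matrix (Fin 2) (Fin 2) ℝ} {s : ℝ}
    (hB : 0 < B.det) (hBN : B * N * Bᵀ = (s * B.det) • 1) :
    ∃ S : Matrix (Fin 2) (Fin 2) ℝ, S * J2 * Sᵀ = J2 ∧ S * N * Sᵀ = s • 1 := by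
  have hc : (√B.det)⁻¹ ^ 2 * B.det = 1 := by
    rw [inv_pow, Real.sq_sqrt hB.le, inv_mul_cancel₀ hB.ne']
  refine ⟨(√B.det)⁻¹ • B, ?_, ?_⟩
  · rw [mul_J2_mul_transpose, det_smul, Fintype.card_fin, hc, one_smul]
  · rw [transpose_smul, smul_mul_assoc, smul_mul_assoc, mul_smul_comm, hBN, smul_smul, smul_smul]
    congr 1
    linear_combination s * hc

theorem PosDef.exists_symplectic_conj_eq_sqrt_det_smul_one {N : Matrix (Fin 2) (Fin 2) ℝ}
    (hN : N.PosDef) :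
    ∃ S : Matrix (Fin 2) (Fin 2) ℝ, S * J2 * Sᵀ = J2 ∧ S * N * Sᵀ = √N.det • 1 := by
  have hdet : N.det = √N.det ^ 2 := (Real.sq_sqrt hN.det_pos.le).symm
  have hs : 0 < √N.det := Real.sqrt_pos.mpr hN.det_pos
  have htr := hN.trace_pos
  have hsymm : N.IsSymm := isHermitian_iff_isSymm.mp hN.isHermitian
  have hBdet := det_adjugate_add_smul_one_of_det_eq_sq hdet
  refine exists_symplectic_conj_eq_smul_one (B := adjugate N + √N.det • 1) ?_ ?_
  · rw [hBdet]
    positivity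
  · rw [transpose_add, adjugate_transpose, hsymm.eq, transpose_smul, transpose_one,
      adjugate_add_smul_one_mul_self_mul_of_det_eq_sq hdet, hBdet]
    ring_nf

end Matrix

theorem symplectic_balancing (N : Matrix (Fin 2) (Fin 2) ℝ)
    (hpd : N.PosDef) :
    (∃ S : Matrix (Fin 2) (Fin 2) ℝ, S * J2 * Sᵀ = J2 ∧
        S * N * Sᵀ = Real.sqrt N.det • (1 : Matrix (Fin 2) (Fin 2) ℝ)) ∧
      2 * Real.sqrt N.det ≤ N.trace ∧
      2 / Real.sqrt (4 + 2 * N.trace + N.det) ≤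
        2 / Real.sqrt (4 + 4 * Real.sqrt N.det + N.det) := by
  have htr : 2 * √N.det ≤ N.trace := by
    refine (pow_le_pow_iff_left₀ (by positivity) hpd.trace_pos.le two_ne_zero).mp ?_
    rw [mul_pow, Real.sq_sqrt hpd.det_pos.le]
    linarith [four_mul_det_le_trace_sq_fin_two (isHermitian_iff_isSymm.mp hpd.isHermitian)]
  refine ⟨hpd.exists_symplectic_conj_eq_sqrt_det_smul_one, htr, ?_⟩
  have hdet := hpd.det_pos
  gcongr 2 / √(4 + ?_ + _)
  linarith
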